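/- arXiv:2101.06418 — 6 statements merged into one kernel-verified Lean document; each statement's English description precedes it below -/
import Mathlib

section
/- Let f : [0,1] → ℝ be C¹, let s⁻, s⁺ ∈ [0,1] with s⁻ ≠ s⁺, and set λ = (f(s⁺) − f(s⁻))/(s⁺ − s⁻). Assume the Oleinik entropy condition: for every ς between s⁻ and s⁺, sign(s⁺ − s⁻)·[ f(ς) − f(s⁻) − λ(ς − s⁻) ] ≥ 0. Let η : ℝ → ℝ be C² and convex, and let q(σ) = ∫₀^σ η′(ς) f′(ς) dς. Then q(s⁺) − q(s⁻) − λ·(η(s⁺) − η(s⁻)) ≤ 0. -/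
open Set MeasureTheory intervalIntegral

/-- Entropy dissipation across an entropic `s`-wave: for a shock satisfying the
Oleinik chord condition, the entropy production `Δq − λ·Δη` is nonpositive for
every convex entropy `η`. -/
theorem stmt_2 (f : ℝ → ℝ) (hf : ContDiffOn ℝ 1 f (Set.Icc 0 1))
    (sm sp : ℝ) (hsm : sm ∈ Set.Icc (0:ℝ) 1) (hsp : sp ∈ Set.Icc (0:ℝ) 1)
    (hne : sm ≠ sp) (lam : ℝ) (hlam : lam = (f sp - f sm) / (sp - sm))
    (holeinik : ∀ ς ∈ Set.uIcc sm sp,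
      0 ≤ Real.sign (sp - sm) * (f ς - f sm - lam * (ς - sm)))
    (η : ℝ → ℝ) (hη : ContDiff ℝ 2 η) (hconv : ConvexOn ℝ Set.univ η) :
    (∫ ς in (0:ℝ)..sp, deriv η ς * derivWithin f (Set.Icc 0 1) ς)
      - (∫ ς in (0:ℝ)..sm, deriv η ς * derivWithin f (Set.Icc 0 1) ς)
      - lam * (η sp - η sm) ≤ 0 := by
  set F := derivWithin f (Set.Icc (0:ℝ) 1) with hFdef
  set g : ℝ → ℝ := fun ς => f ς - f sm - lam * (ς - sm) with hgdef
  have h2 : (2 : ℕ∞) = 1 + 1 := by norm_num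
  have hη1 : ContDiff ℝ 1 (deriv η) := by
    have h2' : ContDiff ℝ (1 + 1) η := by norm_num; exact hη
    exact (contDiff_succ_iff_deriv.mp h2').2.2
  have hηd : Differentiable ℝ η := hη.differentiable (by norm_num)
  have hη'd : Differentiable ℝ (deriv η) := hη1.differentiable (by norm_num)
  have hη'c : Continuous (deriv η) := hη'd.continuous
  have hη''c : Continuous (deriv (deriv η)) := hη1.continuous_deriv le_rfl
  have hFc : ContinuousOn F (Set.Icc 0 1) :=
    hf.continuousOn_derivWithin (uniqueDiffOn_Icc one_pos) le_rfl
  have hfc : ContinuousOn f (Set.Icc (0:ℝ) 1) := hf.continuousOn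
  have hsub : Set.uIcc sm sp ⊆ Set.Icc (0:ℝ) 1 := Set.uIcc_subset_Icc hsm hsp
  have hsub0p : Set.uIcc 0 sp ⊆ Set.Icc (0:ℝ) 1 :=
    Set.uIcc_subset_Icc (Set.left_mem_Icc.mpr zero_le_one) hsp
  have hsub0m : Set.uIcc 0 sm ⊆ Set.Icc (0:ℝ) 1 :=
    Set.uIcc_subset_Icc (Set.left_mem_Icc.mpr zero_le_one) hsm
  have hhc : ContinuousOn (fun ς => deriv η ς * F ς) (Set.Icc (0:ℝ) 1) :=
    hη'c.continuousOn.mul hFc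
  -- Step A: combine the two integrals
  have hA : (∫ ς in (0:ℝ)..sp, deriv η ς * F ς) - (∫ ς in (0:ℝ)..sm, deriv η ς * F ς)
      = ∫ ς in sm..sp, deriv η ς * F ς :=
    intervalIntegral.integral_interval_sub_left
      ((hhc.mono hsub0p).intervalIntegrable) ((hhc.mono hsub0m).intervalIntegrable)
  -- Step B: FTC for η
  have hB : η sp - η sm = ∫ ς in sm..sp, deriv η ς :=
    (intervalIntegral.integral_deriv_eq_sub (fun x _ => hηd.differentiableAt)
      (hη'c.intervalIntegrable _ _)).symm
  -- interior derivative of f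
  have hd : ∀ x ∈ Set.Ioo (0:ℝ) 1, HasDerivAt f (F x) x := by
    intro x hx
    have hxI : x ∈ Set.Icc (0:ℝ) 1 := Set.mem_Icc_of_Ioo hx
    have := (hf.differentiableOn (by norm_num) x hxI).hasDerivWithinAt
    exact this.hasDerivAt (Icc_mem_nhds hx.1 hx.2)
  have hIooSub : Set.Ioo (min sm sp) (max sm sp) ⊆ Set.Ioo (0:ℝ) 1 := by
    intro x hx
    constructor
    · exact lt_of_le_of_lt (le_min hsm.1 hsp.1) hx.1
    · exact lt_of_lt_of_le hx.2 (max_le hsm.2 hsp.2)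
  -- Step C: integration by parts
  have hgc : ContinuousOn g (Set.uIcc sm sp) := by
    apply ContinuousOn.sub ((hfc.mono hsub).sub continuousOn_const)
    exact (continuous_const.mul (continuous_id.sub continuous_const)).continuousOn
  have hgsp : g sp = 0 := by
    have hne' : sp - sm ≠ 0 := sub_ne_zero.mpr (Ne.symm hne)
    simp only [hgdef, hlam]
    field_simp
    ring
  have hgsm : g sm = 0 := by simp [hgdef]
  have hC : ∫ x in sm..sp, deriv η x * (F x - lam)
      = deriv η sp * g sp - deriv η sm * g sm - ∫ x in sm..sp, deriv (deriv η) x * g x := by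
    apply intervalIntegral.integral_mul_deriv_eq_deriv_mul_of_hasDerivAt
    · exact hη'c.continuousOn
    · exact hgc
    · exact fun x _ => hη'd.differentiableAt.hasDerivAt
    · intro x hx
      have h1 := hd x (hIooSub hx)
      have hlin : HasDerivAt (fun ς : ℝ => lam * (ς - sm)) lam x := by
        simpa using ((hasDerivAt_id x).sub_const sm).const_mul lam
      exact (h1.sub_const (f sm)).sub hlin
    · exact (hη''c.intervalIntegrable _ _)
    · exact (((hFc.mono hsub).sub continuousOn_const).intervalIntegrable)
  -- monotone derivative and nonneg second derivative
  have hmono : Monotone (deriv η) := by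
    have := hconv.monotoneOn_deriv (fun x _ => hηd.differentiableAt)
    rwa [monotoneOn_univ] at this
  have hη'' : ∀ x, 0 ≤ deriv (deriv η) x := by
    intro x
    have hs := hη'd.differentiableAt.hasDerivAt (x := x) |>.hasDerivWithinAt (s := Set.Ioi x)
    rw [hasDerivWithinAt_iff_tendsto_slope] at hs
    have hset : Set.Ioi x \ {x} = Set.Ioi x := Set.diff_singleton_eq_self (by simp)
    rw [hset] at hs
    refine ge_of_tendsto hs ?_
    filter_upwards [self_mem_nhdsWithin] with y hy
    have hxy : x < y := hy
    rw [slope_def_field]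
    exact div_nonneg (sub_nonneg.2 (hmono hxy.le)) (sub_pos.2 hxy).le
  -- combine
  have hInt1 : IntervalIntegrable (fun ς => deriv η ς * F ς) volume sm sp :=
    (hhc.mono hsub).intervalIntegrable
  have hInt2 : IntervalIntegrable (fun ς => lam * deriv η ς) volume sm sp :=
    (continuous_const.mul hη'c).intervalIntegrable _ _
  have hmain : (∫ ς in (0:ℝ)..sp, deriv η ς * F ς)
      - (∫ ς in (0:ℝ)..sm, deriv η ς * F ς) - lam * (η sp - η sm)
      = - ∫ x in sm..sp, deriv (deriv η) x * g x := by
    rw [hA, hB, ← intervalIntegral.integral_const_mul, ← intervalIntegral.integral_sub hInt1 hInt2]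
    have : (∫ x in sm..sp, (deriv η x * F x - lam * deriv η x))
        = ∫ x in sm..sp, deriv η x * (F x - lam) := by
      congr 1; funext x; ring
    rw [this, hC, hgsp, hgsm]
    ring
  rw [hmain]
  rcases lt_or_gt_of_ne hne with hlt | hgt
  · have hg : ∀ x ∈ Set.Icc sm sp, 0 ≤ g x := by
      intro x hx
      have := holeinik x (by rw [Set.uIcc_of_le hlt.le]; exact hx)
      rw [Real.sign_of_pos (sub_pos.2 hlt), one_mul] at this
      simpa [hgdef] using this
    have h0 : 0 ≤ ∫ x in sm..sp, deriv (deriv η) x * g x :=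
      intervalIntegral.integral_nonneg hlt.le
        (fun x hx => mul_nonneg (hη'' x) (hg x hx))
    linarith
  · have hg : ∀ x ∈ Set.Icc sp sm, g x ≤ 0 := by
      intro x hx
      have := holeinik x (by rw [Set.uIcc_of_ge hgt.le]; exact hx)
      rw [Real.sign_of_neg (by linarith [hgt] : sp - sm < 0)] at this
      simp only [hgdef]
      linarith
    have h0 : 0 ≤ ∫ x in sp..sm, -(deriv (deriv η) x * g x) :=
      intervalIntegral.integral_nonneg hgt.le
        (fun x hx => by have := mul_nonpos_of_nonneg_of_nonpos (hη'' x) (hg x hx); linarith)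
    rw [intervalIntegral.integral_neg, intervalIntegral.integral_symm sm sp] at h0
    linarith
end

section
/- Let f₁, f₂ : [0,1] → ℝ be C¹ with f₁(0) = f₂(0) = 0. Let 0 ≤ s⁻ ≤ s⁺ ≤ 1 and λ ∈ ℝ satisfy f₁(s⁻) = λ s⁻ and f₂(s⁺) = λ s⁺, and assume there exists s* ∈ [s⁻, s⁺] such that f₁(σ) ≥ λσ for all σ ∈ [s⁻, s*] and f₂(σ) ≥ λσ for all σ ∈ [s*, s⁺]. Let η : ℝ → ℝ be C² and convex, and set q_i(σ) = ∫₀^σ η′(ς) f_i′(ς) dς for i = 1,2. Then q₂(s⁺) − q₁(s⁻) − λ·(η(s⁺) − η(s⁻)) ≤ (sup_{σ∈[0,1]} |f₁(σ) − f₂(σ)|) · ∫₀¹ η″(ς) dς. -/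
open intervalIntegral Set MeasureTheory

private lemma parts_aux (f η : ℝ → ℝ) (hf : ContDiffOn ℝ 1 f (Set.Icc 0 1)) (hf0 : f 0 = 0)
    (hη : ContDiff ℝ 2 η) (s : ℝ) (h0 : 0 ≤ s) (h1 : s ≤ 1) :
    (∫ ς in (0:ℝ)..s, deriv η ς * derivWithin f (Set.Icc 0 1) ς)
      = deriv η s * f s - ∫ ς in (0:ℝ)..s, deriv (deriv η) ς * f ς := by
  have hη' : ContDiff ℝ (1+1) η := by norm_num; exact hη
  have h1' : ContDiff ℝ 1 (deriv η) := (contDiff_succ_iff_deriv.mp hη').2.2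
  have hcDη : Continuous (deriv η) := h1'.continuous
  have hcDDη : Continuous (deriv (deriv η)) := h1'.continuous_deriv le_rfl
  have hud : UniqueDiffOn ℝ (Set.Icc (0:ℝ) 1) := uniqueDiffOn_Icc one_pos
  have hcf : ContinuousOn f (Set.Icc 0 1) := hf.continuousOn
  have hcf' : ContinuousOn (derivWithin f (Set.Icc 0 1)) (Set.Icc 0 1) :=
    hf.continuousOn_derivWithin hud le_rfl
  have hsub : Set.uIcc (0:ℝ) s ⊆ Set.Icc 0 1 := by
    rw [Set.uIcc_of_le h0]; exact Set.Icc_subset_Icc le_rfl h1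
  have hint1 : IntervalIntegrable (fun ς => deriv η ς * derivWithin f (Set.Icc 0 1) ς) volume 0 s :=
    (hcDη.continuousOn.mul (hcf'.mono hsub)).intervalIntegrable
  have hint2 : IntervalIntegrable (fun ς => deriv (deriv η) ς * f ς) volume 0 s :=
    (hcDDη.continuousOn.mul (hcf.mono hsub)).intervalIntegrable
  have key : (∫ ς in (0:ℝ)..s, (deriv (deriv η) ς * f ς + deriv η ς * derivWithin f (Set.Icc 0 1) ς))
      = deriv η s * f s - deriv η 0 * f 0 := by
    apply intervalIntegral.integral_eq_sub_of_hasDeriv_right_of_le h0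
    · exact (hcDη.continuousOn.mul (hcf.mono hsub)).mono (by rw [Set.uIcc_of_le h0])
    · intro x hx
      have hx1 : x ∈ Set.Ioo (0:ℝ) 1 := ⟨hx.1, lt_of_lt_of_le hx.2 h1⟩
      have hnh : Set.Icc (0:ℝ) 1 ∈ nhds x := Icc_mem_nhds hx1.1 hx1.2
      have hfd : DifferentiableAt ℝ f x :=
        ((hf x (Set.mem_Icc.mpr ⟨hx1.1.le, hx1.2.le⟩)).contDiffAt hnh).differentiableAt one_ne_zero
      have hde : derivWithin f (Set.Icc 0 1) x = deriv f x := derivWithin_of_mem_nhds hnh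
      have h1d : HasDerivAt (deriv η) (deriv (deriv η) x) x :=
        ((h1'.differentiable one_ne_zero) x).hasDerivAt
      have := (h1d.mul hfd.hasDerivAt)
      rw [hde]
      exact this.hasDerivWithinAt
    · exact hint2.add hint1
  rw [intervalIntegral.integral_add hint2 hint1] at key
  rw [hf0] at key
  linarith

/-- Entropy dissipation across a `c`-wave (contact discontinuity with flux `f₁`
on the left and `f₂` on the right). -/
theorem stmt_3 (f₁ f₂ : ℝ → ℝ)
    (hf₁ : ContDiffOn ℝ 1 f₁ (Set.Icc 0 1)) (hf₂ : ContDiffOn ℝ 1 f₂ (Set.Icc 0 1))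
    (hf₁0 : f₁ 0 = 0) (hf₂0 : f₂ 0 = 0)
    (sm sp : ℝ) (h0m : 0 ≤ sm) (hmp : sm ≤ sp) (hp1 : sp ≤ 1)
    (lam : ℝ) (hRHm : f₁ sm = lam * sm) (hRHp : f₂ sp = lam * sp)
    (sstar : ℝ) (hs₁ : sm ≤ sstar) (hs₂ : sstar ≤ sp)
    (hent₁ : ∀ σ ∈ Set.Icc sm sstar, lam * σ ≤ f₁ σ)
    (hent₂ : ∀ σ ∈ Set.Icc sstar sp, lam * σ ≤ f₂ σ)
    (η : ℝ → ℝ) (hη : ContDiff ℝ 2 η) (hconv : ConvexOn ℝ Set.univ η) :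
    (∫ ς in (0:ℝ)..sp, deriv η ς * derivWithin f₂ (Set.Icc 0 1) ς)
      - (∫ ς in (0:ℝ)..sm, deriv η ς * derivWithin f₁ (Set.Icc 0 1) ς)
      - lam * (η sp - η sm)
    ≤ (sSup ((fun σ => |f₁ σ - f₂ σ|) '' Set.Icc (0:ℝ) 1))
        * ∫ ς in (0:ℝ)..1, deriv (deriv η) ς := by
  have h0p : (0:ℝ) ≤ sp := h0m.trans hmp
  have hm1 : sm ≤ 1 := hmp.trans hp1
  have hst0 : (0:ℝ) ≤ sstar := h0m.trans hs₁
  have hst1 : sstar ≤ 1 := hs₂.trans hp1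
  have hη' : ContDiff ℝ (1+1) η := by norm_num; exact hη
  have h1' : ContDiff ℝ 1 (deriv η) := (contDiff_succ_iff_deriv.mp hη').2.2
  have hcDDη : Continuous (deriv (deriv η)) := h1'.continuous_deriv le_rfl
  have hcf₁ : ContinuousOn f₁ (Set.Icc 0 1) := hf₁.continuousOn
  have hcf₂ : ContinuousOn f₂ (Set.Icc 0 1) := hf₂.continuousOn
  -- second derivative nonneg
  have hdd : ∀ x : ℝ, 0 ≤ deriv (deriv η) x := by
    intro x
    have hd : Differentiable ℝ η := hη.differentiable two_ne_zero
    have hmono : Monotone (deriv η) :=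
      monotoneOn_univ.mp (hconv.monotoneOn_deriv fun y _ => (hd y))
    have hdd : HasDerivWithinAt (deriv η) (deriv (deriv η) x) (Set.Ioi x) x :=
      ((h1'.differentiable one_ne_zero x).hasDerivAt).hasDerivWithinAt
    rw [hasDerivWithinAt_iff_tendsto_slope] at hdd
    rw [Set.diff_singleton_eq_self (by simp)] at hdd
    refine ge_of_tendsto hdd ?_
    filter_upwards [self_mem_nhdsWithin] with y hy
    have hxy : x < y := hy
    have : 0 ≤ deriv η y - deriv η x := sub_nonneg.mpr (hmono hxy.le)
    simp only [slope_def_field]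
    rw [div_nonneg_iff]
    left; constructor <;> linarith
  -- sup bound
  set M := sSup ((fun σ => |f₁ σ - f₂ σ|) '' Set.Icc (0:ℝ) 1) with hMdef
  have hbdd : BddAbove ((fun σ => |f₁ σ - f₂ σ|) '' Set.Icc (0:ℝ) 1) :=
    (isCompact_Icc.image_of_continuousOn ((hcf₁.sub hcf₂).abs)).bddAbove
  have hM : ∀ σ ∈ Set.Icc (0:ℝ) 1, |f₁ σ - f₂ σ| ≤ M := fun σ hσ =>
    le_csSup hbdd (Set.mem_image_of_mem _ hσ)
  have hM0 : 0 ≤ M := le_trans (abs_nonneg _) (hM 0 (by constructor <;> norm_num))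
  -- integration by parts
  have hp₂ := parts_aux f₂ η hf₂ hf₂0 hη sp h0p hp1
  have hp₁ := parts_aux f₁ η hf₁ hf₁0 hη sm h0m hm1
  -- FTC for lam * (sp * η'(sp) - η sp) etc.
  have hFTC : (∫ ς in sm..sp, ς * deriv (deriv η) ς)
      = (sp * deriv η sp - η sp) - (sm * deriv η sm - η sm) := by
    apply intervalIntegral.integral_eq_sub_of_hasDerivAt
    · intro x hx
      have h1d : HasDerivAt (deriv η) (deriv (deriv η) x) x :=
        ((h1'.differentiable one_ne_zero) x).hasDerivAt
      have hηd : HasDerivAt η (deriv η x) x := ((hη.differentiable two_ne_zero) x).hasDerivAt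
      have := ((hasDerivAt_id x).mul h1d).sub hηd
      convert this using 1
      · rfl
      simp only [id_eq]
      ring
    · exact (((continuous_id'.mul hcDDη)).continuousOn).intervalIntegrable
  -- integrability helpers
  have hIg : ∀ a b : ℝ, 0 ≤ a → b ≤ 1 → a ≤ b → ∀ g : ℝ → ℝ, ContinuousOn g (Set.Icc 0 1) →
      IntervalIntegrable (fun ς => deriv (deriv η) ς * g ς) volume a b := by
    intro a b ha hb hab g hg
    have hsub : Set.uIcc a b ⊆ Set.Icc 0 1 := by
      rw [Set.uIcc_of_le hab]; exact Set.Icc_subset_Icc ha hb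
    exact (hcDDη.continuousOn.mul (hg.mono hsub)).intervalIntegrable
  have hid : ContinuousOn (fun ς : ℝ => ς) (Set.Icc (0:ℝ) 1) := continuous_id.continuousOn
  -- splitting
  have hsplit₂ : (∫ ς in (0:ℝ)..sp, deriv (deriv η) ς * f₂ ς)
      = (∫ ς in (0:ℝ)..sm, deriv (deriv η) ς * f₂ ς)
        + (∫ ς in sm..sstar, deriv (deriv η) ς * f₂ ς)
        + (∫ ς in sstar..sp, deriv (deriv η) ς * f₂ ς) := by
    rw [intervalIntegral.integral_add_adjacent_intervals (hIg 0 sm le_rfl hm1 h0m _ hcf₂)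
      (hIg sm sstar h0m hst1 hs₁ _ hcf₂),
      intervalIntegral.integral_add_adjacent_intervals (hIg 0 sstar le_rfl hst1 hst0 _ hcf₂)
      (hIg sstar sp hst0 hp1 hs₂ _ hcf₂)]
  have hsplitid : (∫ ς in sm..sp, ς * deriv (deriv η) ς)
      = (∫ ς in sm..sstar, ς * deriv (deriv η) ς) + (∫ ς in sstar..sp, ς * deriv (deriv η) ς) := by
    rw [intervalIntegral.integral_add_adjacent_intervals]
    · exact ((continuous_id'.mul hcDDη)).continuousOn.intervalIntegrable
    · exact ((continuous_id'.mul hcDDη)).continuousOn.intervalIntegrable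
  have hsplitD : (∫ ς in (0:ℝ)..1, deriv (deriv η) ς)
      = (∫ ς in (0:ℝ)..sm, deriv (deriv η) ς) + (∫ ς in sm..sstar, deriv (deriv η) ς)
        + (∫ ς in sstar..1, deriv (deriv η) ς) := by
    rw [intervalIntegral.integral_add_adjacent_intervals (hcDDη.intervalIntegrable _ _)
      (hcDDη.intervalIntegrable _ _),
      intervalIntegral.integral_add_adjacent_intervals (hcDDη.intervalIntegrable _ _)
      (hcDDη.intervalIntegrable _ _)]
  -- bound 1 : on [0, sm]
  have hb1 : (∫ ς in (0:ℝ)..sm, deriv (deriv η) ς * f₁ ς)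
      - (∫ ς in (0:ℝ)..sm, deriv (deriv η) ς * f₂ ς)
      ≤ M * ∫ ς in (0:ℝ)..sm, deriv (deriv η) ς := by
    rw [← intervalIntegral.integral_sub (hIg 0 sm le_rfl hm1 h0m _ hcf₁) (hIg 0 sm le_rfl hm1 h0m _ hcf₂),
      ← intervalIntegral.integral_const_mul]
    apply intervalIntegral.integral_mono_on h0m
    · exact (hIg 0 sm le_rfl hm1 h0m _ hcf₁).sub (hIg 0 sm le_rfl hm1 h0m _ hcf₂)
    · exact (continuous_const.mul hcDDη).intervalIntegrable 0 sm
    · intro x hx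
      have hx1 : x ∈ Set.Icc (0:ℝ) 1 := ⟨hx.1, hx.2.trans hm1⟩
      have h1 : deriv (deriv η) x * f₁ x - deriv (deriv η) x * f₂ x
          = deriv (deriv η) x * (f₁ x - f₂ x) := by ring
      rw [h1, mul_comm M _]
      exact mul_le_mul_of_nonneg_left (le_trans (le_abs_self _) (hM x hx1)) (hdd x)
  -- bound 2 : on [sm, sstar]
  have hb2 : lam * (∫ ς in sm..sstar, ς * deriv (deriv η) ς)
      - (∫ ς in sm..sstar, deriv (deriv η) ς * f₂ ς)
      ≤ M * ∫ ς in sm..sstar, deriv (deriv η) ς := by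
    rw [← intervalIntegral.integral_const_mul,
      ← intervalIntegral.integral_sub
        (show IntervalIntegrable (fun x => lam * (x * deriv (deriv η) x)) volume sm sstar from (continuous_const.mul (continuous_id'.mul hcDDη)).intervalIntegrable sm sstar)
        (hIg sm sstar h0m hst1 hs₁ _ hcf₂),
      ← intervalIntegral.integral_const_mul]
    apply intervalIntegral.integral_mono_on hs₁
    · exact ((continuous_const.mul (continuous_id'.mul hcDDη)).intervalIntegrable sm sstar).sub
        (hIg sm sstar h0m hst1 hs₁ _ hcf₂)
    · exact (continuous_const.mul hcDDη).intervalIntegrable sm sstar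
    · intro x hx
      have hx1 : x ∈ Set.Icc (0:ℝ) 1 := ⟨h0m.trans hx.1, hx.2.trans hst1⟩
      have h1 : lam * (x * deriv (deriv η) x) - deriv (deriv η) x * f₂ x
          = deriv (deriv η) x * (lam * x - f₂ x) := by ring
      rw [h1, mul_comm M _]
      apply mul_le_mul_of_nonneg_left _ (hdd x)
      have := hent₁ x hx
      have h2 : f₁ x - f₂ x ≤ |f₁ x - f₂ x| := le_abs_self _
      have := hM x hx1
      linarith
  -- bound 3 : on [sstar, sp]
  have hb3 : lam * (∫ ς in sstar..sp, ς * deriv (deriv η) ς)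
      - (∫ ς in sstar..sp, deriv (deriv η) ς * f₂ ς) ≤ 0 := by
    rw [← intervalIntegral.integral_const_mul,
      ← intervalIntegral.integral_sub
        (show IntervalIntegrable (fun x => lam * (x * deriv (deriv η) x)) volume sstar sp from (continuous_const.mul (continuous_id'.mul hcDDη)).intervalIntegrable sstar sp)
        (hIg sstar sp hst0 hp1 hs₂ _ hcf₂)]
    have hz : (∫ ς in sstar..sp, (lam * (ς * deriv (deriv η) ς) - deriv (deriv η) ς * f₂ ς))
        ≤ ∫ _ς in sstar..sp, (0:ℝ) := by
      apply intervalIntegral.integral_mono_on hs₂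
      · exact ((continuous_const.mul (continuous_id'.mul hcDDη)).intervalIntegrable sstar sp).sub
          (hIg sstar sp hst0 hp1 hs₂ _ hcf₂)
      · exact intervalIntegrable_const
      · intro x hx
        have h1 : lam * (x * deriv (deriv η) x) - deriv (deriv η) x * f₂ x
            = deriv (deriv η) x * (lam * x - f₂ x) := by ring
        rw [h1]
        apply mul_nonpos_of_nonneg_of_nonpos (hdd x)
        have := hent₂ x ⟨hx.1, hx.2⟩
        linarith
    simpa using hz
  -- tail nonneg
  have hb4 : 0 ≤ ∫ ς in sstar..1, deriv (deriv η) ς :=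
    intervalIntegral.integral_nonneg hst1 (fun x _ => hdd x)
  -- assemble
  rw [hp₂, hp₁, hRHm, hRHp]
  have key : deriv η sp * (lam * sp) - deriv η sm * (lam * sm) - lam * (η sp - η sm)
      = lam * (∫ ς in sm..sp, ς * deriv (deriv η) ς) := by
    rw [hFTC]; ring
  have goal1 : deriv η sp * (lam * sp) - (∫ ς in (0:ℝ)..sp, deriv (deriv η) ς * f₂ ς)
      - (deriv η sm * (lam * sm) - (∫ ς in (0:ℝ)..sm, deriv (deriv η) ς * f₁ ς))
      - lam * (η sp - η sm)
      = ((∫ ς in (0:ℝ)..sm, deriv (deriv η) ς * f₁ ς)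
          - (∫ ς in (0:ℝ)..sm, deriv (deriv η) ς * f₂ ς))
        + (lam * (∫ ς in sm..sstar, ς * deriv (deriv η) ς)
          - (∫ ς in sm..sstar, deriv (deriv η) ς * f₂ ς))
        + (lam * (∫ ς in sstar..sp, ς * deriv (deriv η) ς)
          - (∫ ς in sstar..sp, deriv (deriv η) ς * f₂ ς)) := by
    have := key
    rw [hsplitid] at this
    rw [hsplit₂]
    linarith
  rw [goal1, hsplitD]
  nlinarith [hb1, hb2, hb3, hb4, hM0]
end

section
/- Let f₁, f₂ : [0,1] → ℝ be C¹ and nondecreasing (f_i′ ≥ 0), and let s⁻, s⁺ ∈ [0,1] satisfy f₁(s⁻) = f₂(s⁺). Let η : ℝ → ℝ be C², and set q_i(σ) = ∫₀^σ η′(ς) f_i′(ς) dς for i = 1,2. Then q₂(s⁺) − q₁(s⁻) ≤ ( 2·sup_{σ∈[0,1]} |η′(σ)| + ∫₀¹ |η″(ς)| dς ) · sup_{σ∈[0,1]} |f₁(σ) − f₂(σ)|. -/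
open intervalIntegral MeasureTheory Set

private lemma contDiff_one_deriv_aux {η : ℝ → ℝ} (hη : ContDiff ℝ 2 η) :
    ContDiff ℝ 1 (deriv η) := by
  have := (contDiff_succ_iff_deriv (n := 1)).mp (by norm_num at hη ⊢; exact hη)
  exact this.2.2

/-- Integration by parts for `∫₀^s η' · f'` with `f` only `C¹` on `[0,1]`. -/
private lemma ibp_aux (f : ℝ → ℝ) (hf : ContDiffOn ℝ 1 f (Set.Icc 0 1))
    (η : ℝ → ℝ) (hη : ContDiff ℝ 2 η) (s : ℝ) (hs : s ∈ Set.Icc (0:ℝ) 1) :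
    ∫ ς in (0:ℝ)..s, deriv η ς * derivWithin f (Set.Icc 0 1) ς
      = deriv η s * f s - deriv η 0 * f 0
        - ∫ ς in (0:ℝ)..s, deriv (deriv η) ς * f ς := by
  have hg1 : ContDiff ℝ 1 (deriv η) := contDiff_one_deriv_aux hη
  have huIcc : Set.uIcc (0:ℝ) s ⊆ Set.Icc 0 1 := by
    rw [Set.uIcc_of_le hs.1]; exact Set.Icc_subset_Icc le_rfl hs.2
  apply integral_mul_deriv_eq_deriv_mul_of_hasDeriv_right
  · exact hg1.continuous.continuousOn
  · exact hf.continuousOn.mono huIcc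
  · intro x _
    exact (((hg1.differentiable one_ne_zero) x).hasDerivAt).hasDerivWithinAt
  · intro x hx
    have hx' : x ∈ Set.Ioo (0:ℝ) 1 := by
      rw [min_eq_left hs.1, max_eq_right hs.1] at hx
      exact ⟨hx.1, lt_of_lt_of_le hx.2 hs.2⟩
    have hd : HasDerivWithinAt f (derivWithin f (Set.Icc 0 1) x) (Set.Icc 0 1) x :=
      ((hf.differentiableOn one_ne_zero) x (Set.Ioo_subset_Icc_self hx')).hasDerivWithinAt
    exact (hd.hasDerivAt (Icc_mem_nhds hx'.1 hx'.2)).hasDerivWithinAt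
  · exact ((hg1.continuous_deriv le_rfl).continuousOn).intervalIntegrable
  · exact ((hf.continuousOn_derivWithin (uniqueDiffOn_Icc one_pos) le_rfl).mono
      huIcc).intervalIntegrable

private lemma mono_aux (f : ℝ → ℝ) (hf : ContDiffOn ℝ 1 f (Set.Icc 0 1))
    (hmono : ∀ σ ∈ Set.Icc (0:ℝ) 1, 0 ≤ derivWithin f (Set.Icc 0 1) σ) :
    MonotoneOn f (Set.Icc (0:ℝ) 1) := by
  apply monotoneOn_of_deriv_nonneg (convex_Icc 0 1) hf.continuousOn
  · rw [interior_Icc]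
    exact (hf.differentiableOn one_ne_zero).mono Set.Ioo_subset_Icc_self
  · intro x hx
    rw [interior_Icc] at hx
    have hd : HasDerivWithinAt f (derivWithin f (Set.Icc 0 1) x) (Set.Icc 0 1) x :=
      ((hf.differentiableOn one_ne_zero) x (Set.Ioo_subset_Icc_self hx)).hasDerivWithinAt
    rw [(hd.hasDerivAt (Icc_mem_nhds hx.1 hx.2)).deriv]
    exact hmono x (Set.Ioo_subset_Icc_self hx)

/-- Entropy dissipation across a `k`-wave: a stationary discontinuity with flux
`f₁` on the left, flux `f₂` on the right, across which the flux value is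
conserved. -/
theorem stmt_4 (f₁ f₂ : ℝ → ℝ)
    (hf₁ : ContDiffOn ℝ 1 f₁ (Set.Icc 0 1)) (hf₂ : ContDiffOn ℝ 1 f₂ (Set.Icc 0 1))
    (hmono₁ : ∀ σ ∈ Set.Icc (0:ℝ) 1, 0 ≤ derivWithin f₁ (Set.Icc 0 1) σ)
    (hmono₂ : ∀ σ ∈ Set.Icc (0:ℝ) 1, 0 ≤ derivWithin f₂ (Set.Icc 0 1) σ)
    (sm sp : ℝ) (hsm : sm ∈ Set.Icc (0:ℝ) 1) (hsp : sp ∈ Set.Icc (0:ℝ) 1)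
    (hRH : f₁ sm = f₂ sp)
    (η : ℝ → ℝ) (hη : ContDiff ℝ 2 η) :
    (∫ ς in (0:ℝ)..sp, deriv η ς * derivWithin f₂ (Set.Icc 0 1) ς)
      - (∫ ς in (0:ℝ)..sm, deriv η ς * derivWithin f₁ (Set.Icc 0 1) ς)
    ≤ (2 * sSup ((fun σ => |deriv η σ|) '' Set.Icc (0:ℝ) 1)
        + ∫ ς in (0:ℝ)..1, |deriv (deriv η) ς|)
      * sSup ((fun σ => |f₁ σ - f₂ σ|) '' Set.Icc (0:ℝ) 1) := by
  have hg1 : ContDiff ℝ 1 (deriv η) := contDiff_one_deriv_aux hη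
  set g := deriv η with hg_def
  set g' := deriv (deriv η) with hg'_def
  have hgc : Continuous g := hg1.continuous
  have hg'c : Continuous g' := hg1.continuous_deriv le_rfl
  set M := sSup ((fun σ => |g σ|) '' Set.Icc (0:ℝ) 1) with hM_def
  set D := sSup ((fun σ => |f₁ σ - f₂ σ|) '' Set.Icc (0:ℝ) 1) with hD_def
  -- basic facts about the suprema
  have hMbdd : BddAbove ((fun σ => |g σ|) '' Set.Icc (0:ℝ) 1) :=
    (isCompact_Icc.bddAbove_image (hgc.abs.continuousOn))
  have hDbdd : BddAbove ((fun σ => |f₁ σ - f₂ σ|) '' Set.Icc (0:ℝ) 1) :=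
    (isCompact_Icc.bddAbove_image ((hf₁.continuousOn.sub hf₂.continuousOn).abs))
  have hMub : ∀ x ∈ Set.Icc (0:ℝ) 1, |g x| ≤ M := fun x hx => le_csSup hMbdd ⟨x, hx, rfl⟩
  have hDub : ∀ x ∈ Set.Icc (0:ℝ) 1, |f₁ x - f₂ x| ≤ D := fun x hx => le_csSup hDbdd ⟨x, hx, rfl⟩
  have h01 : (0:ℝ) ∈ Set.Icc (0:ℝ) 1 := ⟨le_rfl, zero_le_one⟩
  have hM0 : 0 ≤ M := le_trans (abs_nonneg _) (hMub 0 h01)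
  have hD0 : 0 ≤ D := le_trans (abs_nonneg _) (hDub 0 h01)
  -- integrability helpers
  have hint : ∀ (h : ℝ → ℝ), ContinuousOn h (Set.Icc 0 1) → ∀ a b : ℝ,
      a ∈ Set.Icc (0:ℝ) 1 → b ∈ Set.Icc (0:ℝ) 1 →
      IntervalIntegrable (fun x => g' x * h x) volume a b := by
    intro h hh a b ha hb
    apply ContinuousOn.intervalIntegrable
    apply (hg'c.continuousOn).mul
    exact hh.mono (Set.uIcc_subset_Icc ha hb)
  have hintabs : ∀ a b : ℝ, IntervalIntegrable (fun x => |g' x| * D) volume a b :=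
    fun a b => (hg'c.abs.mul continuous_const).intervalIntegrable a b
  -- integration by parts on both integrals
  have hibp₁ := ibp_aux f₁ hf₁ η hη sm hsm
  have hibp₂ := ibp_aux f₂ hf₂ η hη sp hsp
  -- the key algebraic identity
  have hcont₁₂ : ContinuousOn (fun x => f₁ x - f₂ x) (Set.Icc (0:ℝ) 1) :=
    hf₁.continuousOn.sub hf₂.continuousOn
  have key : (∫ ς in (0:ℝ)..sp, g ς * derivWithin f₂ (Set.Icc 0 1) ς)
      - (∫ ς in (0:ℝ)..sm, g ς * derivWithin f₁ (Set.Icc 0 1) ς)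
      = (∫ ς in (0:ℝ)..sm, g' ς * (f₁ ς - f₂ ς)) + g 0 * (f₁ 0 - f₂ 0)
        + ∫ ς in sm..sp, g' ς * (f₁ sm - f₂ ς) := by
    rw [hibp₁, hibp₂]
    -- split ∫₀^{sp} g' f₂ at sm
    have hsplit : (∫ ς in (0:ℝ)..sm, g' ς * f₂ ς) + (∫ ς in sm..sp, g' ς * f₂ ς)
        = ∫ ς in (0:ℝ)..sp, g' ς * f₂ ς :=
      integral_add_adjacent_intervals (hint f₂ hf₂.continuousOn 0 sm h01 hsm)
        (hint f₂ hf₂.continuousOn sm sp hsm hsp)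
    -- (g sp - g sm) * f₁ sm = ∫_{sm}^{sp} g' * f₁ sm
    have hftc : (∫ ς in sm..sp, g' ς * f₁ sm) = (g sp - g sm) * f₁ sm := by
      rw [intervalIntegral.integral_mul_const]
      congr 1
      exact integral_deriv_eq_sub (fun x _ => (hg1.differentiable one_ne_zero) x)
        ((hg'c.continuousOn).intervalIntegrable)
    have hsub₁ : (∫ ς in (0:ℝ)..sm, g' ς * (f₁ ς - f₂ ς))
        = (∫ ς in (0:ℝ)..sm, g' ς * f₁ ς) - (∫ ς in (0:ℝ)..sm, g' ς * f₂ ς) := by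
      rw [← intervalIntegral.integral_sub (hint f₁ hf₁.continuousOn 0 sm h01 hsm)
        (hint f₂ hf₂.continuousOn 0 sm h01 hsm)]
      congr 1; ext x; ring
    have hsub₂ : (∫ ς in sm..sp, g' ς * (f₁ sm - f₂ ς))
        = (∫ ς in sm..sp, g' ς * f₁ sm) - (∫ ς in sm..sp, g' ς * f₂ ς) := by
      rw [← intervalIntegral.integral_sub
        (show IntervalIntegrable (fun x => g' x * f₁ sm) volume sm sp from
          (hg'c.mul continuous_const).intervalIntegrable sm sp)
        (hint f₂ hf₂.continuousOn sm sp hsm hsp)]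
      congr 1; ext x; ring
    rw [hsub₁, hsub₂, hftc, hRH]
    linarith [hsplit]
  rw [key]
  -- now the estimate; V = ∫₀¹ |g'|
  have hVD : ∀ a b : ℝ, 0 ≤ a → a ≤ b → b ≤ 1 →
      (∫ ς in a..b, |g' ς| * D) ≤ ∫ ς in (0:ℝ)..1, |g' ς| * D := by
    intro a b h0a hab hb1
    apply intervalIntegral.integral_mono_interval h0a hab hb1 _ (hintabs 0 1)
    filter_upwards with x using mul_nonneg (abs_nonneg _) hD0
  have hptD : ∀ x, ∀ c : ℝ, |c| ≤ D → g' x * c ≤ |g' x| * D := by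
    intro x c hc
    calc g' x * c ≤ |g' x * c| := le_abs_self _
      _ = |g' x| * |c| := abs_mul _ _
      _ ≤ |g' x| * D := mul_le_mul_of_nonneg_left hc (abs_nonneg _)
  have hb2 : g 0 * (f₁ 0 - f₂ 0) ≤ M * D := by
    calc g 0 * (f₁ 0 - f₂ 0) ≤ |g 0 * (f₁ 0 - f₂ 0)| := le_abs_self _
      _ = |g 0| * |f₁ 0 - f₂ 0| := abs_mul _ _
      _ ≤ M * D := mul_le_mul (hMub 0 h01) (hDub 0 h01) (abs_nonneg _) hM0
  have hVDmul : (∫ ς in (0:ℝ)..1, |g' ς| * D) = (∫ ς in (0:ℝ)..1, |g' ς|) * D :=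
    intervalIntegral.integral_mul_const _ _
  have hmf₁ : MonotoneOn f₁ (Set.Icc (0:ℝ) 1) := mono_aux f₁ hf₁ hmono₁
  have hmf₂ : MonotoneOn f₂ (Set.Icc (0:ℝ) 1) := mono_aux f₂ hf₂ hmono₂
  -- combine, splitting on the order of sm, sp
  have main : (∫ ς in (0:ℝ)..sm, g' ς * (f₁ ς - f₂ ς))
      + ∫ ς in sm..sp, g' ς * (f₁ sm - f₂ ς) ≤ (∫ ς in (0:ℝ)..1, |g' ς|) * D := by
    rcases le_total sm sp with hms | hms
    · -- sm ≤ sp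
      have hIcc : Set.Icc sm sp ⊆ Set.Icc (0:ℝ) 1 := Set.Icc_subset_Icc hsm.1 hsp.2
      have b1 : (∫ ς in (0:ℝ)..sm, g' ς * (f₁ ς - f₂ ς)) ≤ ∫ ς in (0:ℝ)..sm, |g' ς| * D := by
        apply intervalIntegral.integral_mono_on hsm.1
          (hint _ hcont₁₂ 0 sm h01 hsm) (hintabs 0 sm)
        intro x hx
        exact hptD x _ (hDub x (Set.Icc_subset_Icc le_rfl hsm.2 hx))
      have b3 : (∫ ς in sm..sp, g' ς * (f₁ sm - f₂ ς)) ≤ ∫ ς in sm..sp, |g' ς| * D := by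
        apply intervalIntegral.integral_mono_on hms
          (hint _ (continuousOn_const.sub hf₂.continuousOn) sm sp hsm hsp) (hintabs sm sp)
        intro x hx
        apply hptD x
        show |f₁ sm - f₂ x| ≤ D
        rw [hRH]
        have h1 : f₂ x ≤ f₂ sp := hmf₂ (hIcc hx) hsp hx.2
        have h2 : f₂ sp - f₂ x ≤ f₂ sp - f₂ sm := by
          have := hmf₂ hsm (hIcc hx) hx.1; linarith
        rw [abs_of_nonneg (by linarith)]
        calc f₂ sp - f₂ x ≤ f₂ sp - f₂ sm := h2
          _ = f₁ sm - f₂ sm := by rw [hRH]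
          _ ≤ |f₁ sm - f₂ sm| := le_abs_self _
          _ ≤ D := hDub sm hsm
      have badd : (∫ ς in (0:ℝ)..sm, |g' ς| * D) + (∫ ς in sm..sp, |g' ς| * D)
          = ∫ ς in (0:ℝ)..sp, |g' ς| * D :=
        integral_add_adjacent_intervals (hintabs 0 sm) (hintabs sm sp)
      have := hVD 0 sp le_rfl hsp.1 hsp.2
      rw [hVDmul] at this
      linarith
    · -- sp ≤ sm
      have hIcc : Set.Icc sp sm ⊆ Set.Icc (0:ℝ) 1 := Set.Icc_subset_Icc hsp.1 hsm.2
      -- split the first integral at sp and flip the second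
      have hsplit : (∫ ς in (0:ℝ)..sp, g' ς * (f₁ ς - f₂ ς))
          + (∫ ς in sp..sm, g' ς * (f₁ ς - f₂ ς))
          = ∫ ς in (0:ℝ)..sm, g' ς * (f₁ ς - f₂ ς) :=
        integral_add_adjacent_intervals (hint _ hcont₁₂ 0 sp h01 hsp)
          (hint _ hcont₁₂ sp sm hsp hsm)
      have hflip : (∫ ς in sm..sp, g' ς * (f₁ sm - f₂ ς))
          = -∫ ς in sp..sm, g' ς * (f₁ sm - f₂ ς) :=
        intervalIntegral.integral_symm sp sm
      have hcomb : (∫ ς in sp..sm, g' ς * (f₁ ς - f₂ ς))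
          - (∫ ς in sp..sm, g' ς * (f₁ sm - f₂ ς))
          = ∫ ς in sp..sm, g' ς * (f₁ ς - f₁ sm) := by
        rw [← intervalIntegral.integral_sub (hint _ hcont₁₂ sp sm hsp hsm)
          (hint (fun x => f₁ sm - f₂ x) (continuousOn_const.sub hf₂.continuousOn) sp sm hsp hsm)]
        congr 1; ext x; ring
      have b1 : (∫ ς in (0:ℝ)..sp, g' ς * (f₁ ς - f₂ ς)) ≤ ∫ ς in (0:ℝ)..sp, |g' ς| * D := by
        apply intervalIntegral.integral_mono_on hsp.1
          (hint _ hcont₁₂ 0 sp h01 hsp) (hintabs 0 sp)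
        intro x hx
        exact hptD x _ (hDub x (Set.Icc_subset_Icc le_rfl hsp.2 hx))
      have b3 : (∫ ς in sp..sm, g' ς * (f₁ ς - f₁ sm)) ≤ ∫ ς in sp..sm, |g' ς| * D := by
        apply intervalIntegral.integral_mono_on hms
          (hint _ (hf₁.continuousOn.sub continuousOn_const) sp sm hsp hsm) (hintabs sp sm)
        intro x hx
        apply hptD x
        show |f₁ x - f₁ sm| ≤ D
        have h1 : f₁ x ≤ f₁ sm := hmf₁ (hIcc hx) hsm hx.2
        have h2 : f₁ sm - f₁ x ≤ f₁ sm - f₁ sp := by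
          have := hmf₁ hsp (hIcc hx) hx.1; linarith
        rw [abs_of_nonpos (by linarith), neg_sub]
        calc f₁ sm - f₁ x ≤ f₁ sm - f₁ sp := h2
          _ = f₂ sp - f₁ sp := by rw [hRH]
          _ ≤ |f₁ sp - f₂ sp| := by rw [abs_sub_comm]; exact le_abs_self _
          _ ≤ D := hDub sp hsp
      have badd : (∫ ς in (0:ℝ)..sp, |g' ς| * D) + (∫ ς in sp..sm, |g' ς| * D)
          = ∫ ς in (0:ℝ)..sm, |g' ς| * D :=
        integral_add_adjacent_intervals (hintabs 0 sp) (hintabs sp sm)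
      have := hVD 0 sm le_rfl hsm.1 hsm.2
      rw [hVDmul] at this
      linarith
  have expand : (2 * M + ∫ ς in (0:ℝ)..1, |g' ς|) * D
      = M * D + M * D + (∫ ς in (0:ℝ)..1, |g' ς|) * D := by ring
  rw [expand]
  linarith [mul_nonneg hM0 hD0]
end

section
/- Let g : [0,1] → ℝ be continuous, s^L ∈ [0,1], and define G^L : [0,1] → ℝ by G^L(σ) = max{ g(ς) : ς ∈ [σ, s^L] } for σ ≤ s^L and G^L(σ) = min{ g(ς) : ς ∈ [s^L, σ] } for σ ≥ s^L. Let γ be a value attained by G^L, let I = (G^L)⁻¹({γ}) (a nonempty closed subinterval of [0,1]), and let s⁻ be the point of I closest to s^L. Then g(s⁻) = γ. -/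
/-- At the projection `s⁻` of `s^L` onto the level set `I = (G^L)⁻¹({γ})`, the
auxiliary function `G^L` coincides with `g`, i.e. `g s⁻ = γ`. -/
theorem stmt_9 (g : ℝ → ℝ) (hg : ContinuousOn g (Set.Icc 0 1))
    (sL : ℝ) (hsL : sL ∈ Set.Icc (0:ℝ) 1)
    (Gl : ℝ → ℝ)
    (hGlle : ∀ σ ∈ Set.Icc (0:ℝ) 1, σ ≤ sL → Gl σ = sSup (g '' Set.Icc σ sL))
    (hGlge : ∀ σ ∈ Set.Icc (0:ℝ) 1, sL ≤ σ → Gl σ = sInf (g '' Set.Icc sL σ))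
    (γ : ℝ) (hγ : ∃ σ ∈ Set.Icc (0:ℝ) 1, Gl σ = γ)
    (sm : ℝ) (hsmI : sm ∈ Set.Icc (0:ℝ) 1 ∧ Gl sm = γ)
    (hproj : ∀ σ ∈ Set.Icc (0:ℝ) 1, Gl σ = γ → |sm - sL| ≤ |σ - sL|) :
    g sm = γ := by
  obtain ⟨⟨hsm0, hsm1⟩, hGsm⟩ := hsmI
  rcases le_total sm sL with hle | hle
  · have hsub : Set.Icc sm sL ⊆ Set.Icc 0 1 := Set.Icc_subset_Icc hsm0 hsL.2
    have hcomp : IsCompact (Set.Icc sm sL) := isCompact_Icc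
    have hne : (Set.Icc sm sL).Nonempty := Set.nonempty_Icc.2 hle
    have hcont := hg.mono hsub
    obtain ⟨t, htmem, hteq⟩ := hcomp.exists_sSup_image_eq hne hcont
    have hγt : g t = γ := by rw [← hteq, ← hGlle sm ⟨hsm0, hsm1⟩ hle, hGsm]
    have ht01 : t ∈ Set.Icc (0:ℝ) 1 := hsub htmem
    have hGt : Gl t = γ := by
      rw [hGlle t ht01 htmem.2]
      apply le_antisymm
      · apply csSup_le ((Set.nonempty_Icc.2 htmem.2).image g)
        rintro y ⟨x, hx, rfl⟩
        rw [← hGsm, hGlle sm ⟨hsm0, hsm1⟩ hle]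
        exact le_csSup (hcomp.image_of_continuousOn hcont).bddAbove
          ⟨x, ⟨le_trans htmem.1 hx.1, hx.2⟩, rfl⟩
      · rw [← hγt]
        exact le_csSup ((isCompact_Icc.image_of_continuousOn
          (hg.mono (Set.Icc_subset_Icc ht01.1 hsL.2))).bddAbove)
          ⟨t, ⟨le_refl t, htmem.2⟩, rfl⟩
    have hpt := hproj t ht01 hGt
    have hts : t = sm := by
      rw [abs_sub_comm sm sL, abs_sub_comm t sL,
        abs_of_nonneg (sub_nonneg.2 hle), abs_of_nonneg (sub_nonneg.2 htmem.2)] at hpt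
      linarith [htmem.1]
    rw [← hts]; exact hγt
  · have hsub : Set.Icc sL sm ⊆ Set.Icc 0 1 := Set.Icc_subset_Icc hsL.1 hsm1
    have hcomp : IsCompact (Set.Icc sL sm) := isCompact_Icc
    have hne : (Set.Icc sL sm).Nonempty := Set.nonempty_Icc.2 hle
    have hcont := hg.mono hsub
    obtain ⟨t, htmem, hteq⟩ := hcomp.exists_sInf_image_eq hne hcont
    have hγt : g t = γ := by rw [← hteq, ← hGlge sm ⟨hsm0, hsm1⟩ hle, hGsm]
    have ht01 : t ∈ Set.Icc (0:ℝ) 1 := hsub htmem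
    have hGt : Gl t = γ := by
      rw [hGlge t ht01 htmem.1]
      apply le_antisymm
      · rw [← hγt]
        exact csInf_le ((isCompact_Icc.image_of_continuousOn
          (hg.mono (Set.Icc_subset_Icc hsL.1 ht01.2))).bddBelow)
          ⟨t, ⟨htmem.1, le_refl t⟩, rfl⟩
      · apply le_csInf ((Set.nonempty_Icc.2 htmem.1).image g)
        rintro y ⟨x, hx, rfl⟩
        rw [← hGsm, hGlge sm ⟨hsm0, hsm1⟩ hle]
        exact csInf_le (hcomp.image_of_continuousOn hcont).bddBelow
          ⟨x, ⟨hx.1, le_trans hx.2 htmem.2⟩, rfl⟩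
    have hpt := hproj t ht01 hGt
    have hts : t = sm := by
      rw [abs_of_nonneg (sub_nonneg.2 hle), abs_of_nonneg (sub_nonneg.2 htmem.1)] at hpt
      linarith [htmem.2]
    rw [← hts]; exact hγt
end

section
/- Let F : ℝ → ℝ be C² on [0,1] and G : ℝ → ℝ be C¹ on [0,1]. For v, w ∈ [0,1] define I(v,w) = (v − w)·∫_w^v F′(σ)² dσ − (F(v) − F(w))² and q(σ) = ∫₀^σ G′(ς) F′(ς) dς. Then (v − w)·( q(v) − q(w) ) ≥ I(v,w) + (F(v) − F(w))² − ( 2·sup_{[0,1]} |F′| + sup_{[0,1]} |F″| ) · sup_{σ∈[0,1]} |G(σ) − F(σ)|. -/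
/-- Pointwise inequality relating the quadratic entropy pair to the Jensen
functional `I`, used in the compensated compactness argument. -/
theorem stmt_10 (F G : ℝ → ℝ)
    (hF : ContDiffOn ℝ 2 F (Set.Icc 0 1)) (hG : ContDiffOn ℝ 1 G (Set.Icc 0 1))
    (v w : ℝ) (hv : v ∈ Set.Icc (0:ℝ) 1) (hw : w ∈ Set.Icc (0:ℝ) 1) :
    (v - w) *
        ((∫ ς in (0:ℝ)..v, derivWithin G (Set.Icc 0 1) ς * derivWithin F (Set.Icc 0 1) ς)
          - ∫ ς in (0:ℝ)..w, derivWithin G (Set.Icc 0 1) ς * derivWithin F (Set.Icc 0 1) ς)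
      ≥ ((v - w) * (∫ σ in w..v, (derivWithin F (Set.Icc 0 1) σ) ^ 2) - (F v - F w) ^ 2)
        + (F v - F w) ^ 2
        - (2 * sSup ((fun σ => |derivWithin F (Set.Icc 0 1) σ|) '' Set.Icc (0:ℝ) 1)
            + sSup ((fun σ => |derivWithin (derivWithin F (Set.Icc 0 1)) (Set.Icc 0 1) σ|)
                      '' Set.Icc (0:ℝ) 1))
          * sSup ((fun σ => |G σ - F σ|) '' Set.Icc (0:ℝ) 1) := by
  set s : Set ℝ := Set.Icc (0:ℝ) 1 with hsdef
  set f : ℝ → ℝ := derivWithin F s with hfdef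
  set f2 : ℝ → ℝ := derivWithin f s with hf2def
  set g : ℝ → ℝ := derivWithin G s with hgdef
  have hu : UniqueDiffOn ℝ s := uniqueDiffOn_Icc one_pos
  have one_le_two : (1:WithTop ℕ∞) ≤ 2 := by norm_num
  have hfc : ContinuousOn f s := hF.continuousOn_derivWithin hu one_le_two
  have hf1 : ContDiffOn ℝ 1 f s := hF.derivWithin hu (by norm_num)
  have hf2c : ContinuousOn f2 s := hf1.continuousOn_derivWithin hu le_rfl
  have hgc : ContinuousOn g s := hG.continuousOn_derivWithin hu le_rfl
  have hFc : ContinuousOn F s := hF.continuousOn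
  have hGc : ContinuousOn G s := hG.continuousOn
  set A := sSup ((fun σ => |f σ|) '' s) with hAdef
  set B := sSup ((fun σ => |f2 σ|) '' s) with hBdef
  set S := sSup ((fun σ => |G σ - F σ|) '' s) with hSdef
  have h0s : (0:ℝ) ∈ s := by constructor <;> norm_num
  have hAle : ∀ x ∈ s, |f x| ≤ A := fun x hx =>
    le_csSup (isCompact_Icc.bddAbove_image hfc.abs) ⟨x, hx, rfl⟩
  have hBle : ∀ x ∈ s, |f2 x| ≤ B := fun x hx =>
    le_csSup (isCompact_Icc.bddAbove_image hf2c.abs) ⟨x, hx, rfl⟩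
  have hSle : ∀ x ∈ s, |G x - F x| ≤ S := fun x hx =>
    le_csSup (isCompact_Icc.bddAbove_image (hGc.sub hFc).abs) ⟨x, hx, rfl⟩
  have hA0 : 0 ≤ A := le_trans (abs_nonneg _) (hAle 0 h0s)
  have hB0 : 0 ≤ B := le_trans (abs_nonneg _) (hBle 0 h0s)
  have hS0 : 0 ≤ S := le_trans (abs_nonneg _) (hSle 0 h0s)
  have hsub : ∀ a b : ℝ, a ∈ s → b ∈ s → Set.uIcc a b ⊆ s := fun a b ha hb =>
    Set.uIcc_subset_Icc ha hb
  have hint_gf : ∀ a b : ℝ, a ∈ s → b ∈ s →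
      IntervalIntegrable (fun ς => g ς * f ς) MeasureTheory.volume a b := fun a b ha hb =>
    (((hgc.mul hfc).mono (hsub a b ha hb))).intervalIntegrable
  set H : ℝ → ℝ := fun x => (G x - F x) * f x with hHdef
  set φ : ℝ → ℝ := fun x => (g x - f x) * f x + (G x - F x) * f2 x with hφdef
  have hφc : ContinuousOn φ s := ((hgc.sub hfc).mul hfc).add ((hGc.sub hFc).mul hf2c)
  have key : ∀ a b : ℝ, a ∈ s → b ∈ s → a ≤ b →
      (∫ x in a..b, φ x) = H b - H a := by
    intro a b ha hb hab
    apply intervalIntegral.integral_eq_sub_of_hasDeriv_right_of_le hab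
    · exact ((hGc.sub hFc).mul hfc).mono (Set.Icc_subset_Icc ha.1 hb.2)
    · intro x hx
      have hx01 : x ∈ Set.Ioo (0:ℝ) 1 := ⟨lt_of_le_of_lt ha.1 hx.1, lt_of_lt_of_le hx.2 hb.2⟩
      have hnx : s ∈ nhds x := Icc_mem_nhds hx01.1 hx01.2
      have hxmem : x ∈ s := ⟨hx01.1.le, hx01.2.le⟩
      have hF' : HasDerivAt F (f x) x :=
        ((hF.differentiableOn (by norm_num) x hxmem).hasDerivWithinAt).hasDerivAt hnx
      have hG' : HasDerivAt G (g x) x :=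
        ((hG.differentiableOn (by norm_num) x hxmem).hasDerivWithinAt).hasDerivAt hnx
      have hf' : HasDerivAt f (f2 x) x :=
        ((hf1.differentiableOn (by norm_num) x hxmem).hasDerivWithinAt).hasDerivAt hnx
      have hH' : HasDerivAt H ((g x - f x) * f x + (G x - F x) * f2 x) x :=
        (hG'.sub hF').mul hf'
      exact hH'.hasDerivWithinAt
    · exact (hφc.mono (hsub a b ha hb)).intervalIntegrable
  have hIBP : (∫ x in w..v, φ x) = H v - H w := by
    rcases le_total w v with h | h
    · exact key w v hw hv h
    · rw [intervalIntegral.integral_symm, key v w hv hw h]; ring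
  have hIgf : ((∫ ς in (0:ℝ)..v, g ς * f ς) - ∫ ς in (0:ℝ)..w, g ς * f ς)
      = ∫ ς in w..v, g ς * f ς :=
    intervalIntegral.integral_interval_sub_left (hint_gf 0 v h0s hv) (hint_gf 0 w h0s hw)
  set E := ∫ ς in w..v, (G ς - F ς) * f2 ς with hEdef
  have hsplit : (∫ ς in w..v, g ς * f ς)
      = (∫ σ in w..v, f σ ^ 2) + ((H v - H w) - E) := by
    have h1 : (∫ x in w..v, φ x)
        = (∫ x in w..v, (g x - f x) * f x) + E := by
      rw [hφdef]
      exact intervalIntegral.integral_add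
        ((((hgc.sub hfc).mul hfc).mono (hsub w v hw hv)).intervalIntegrable)
        ((((hGc.sub hFc).mul hf2c).mono (hsub w v hw hv)).intervalIntegrable)
    have h2 : (∫ ς in w..v, g ς * f ς)
        = (∫ σ in w..v, f σ ^ 2) + ∫ x in w..v, (g x - f x) * f x := by
      have heq : (fun ς => g ς * f ς) = fun ς => f ς ^ 2 + (g ς - f ς) * f ς := by
        funext ς; ring
      rw [heq]
      exact intervalIntegral.integral_add
        (((hfc.pow 2).mono (hsub w v hw hv)).intervalIntegrable)
        ((((hgc.sub hfc).mul hfc).mono (hsub w v hw hv)).intervalIntegrable)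
    linarith [hIBP, h1, h2]
  -- bounds
  have hd : |v - w| ≤ 1 := by
    rw [abs_le]
    constructor <;> linarith [hv.1, hv.2, hw.1, hw.2]
  have hHv : |H v| ≤ S * A := by
    rw [hHdef]; simp only [abs_mul]
    exact mul_le_mul (hSle v hv) (hAle v hv) (abs_nonneg _) hS0
  have hHw : |H w| ≤ S * A := by
    rw [hHdef]; simp only [abs_mul]
    exact mul_le_mul (hSle w hw) (hAle w hw) (abs_nonneg _) hS0
  have hE : |E| ≤ S * B * |v - w| := by
    rw [hEdef, ← Real.norm_eq_abs]
    apply intervalIntegral.norm_integral_le_of_norm_le_const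
    intro x hx
    have hxs : x ∈ s := hsub w v hw hv (Set.uIoc_subset_uIcc hx)
    rw [Real.norm_eq_abs, abs_mul]
    exact mul_le_mul (hSle x hxs) (hBle x hxs) (abs_nonneg _) hS0
  have h1 : (v - w) * (H v - H w) ≥ -(2 * (S * A)) := by
    have hna := neg_abs_le ((v - w) * (H v - H w))
    have h2 : |(v - w) * (H v - H w)| ≤ 1 * (2 * (S * A)) := by
      rw [abs_mul]
      apply mul_le_mul hd _ (abs_nonneg _) zero_le_one
      calc |H v - H w| ≤ |H v| + |H w| := abs_sub _ _
        _ ≤ 2 * (S * A) := by linarith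
    linarith
  have h2 : (v - w) * E ≤ S * B := by
    have hb : |(v - w) * E| ≤ S * B := by
      rw [abs_mul]
      have := mul_le_mul_of_nonneg_left hE (abs_nonneg (v - w))
      nlinarith [abs_nonneg (v - w), abs_nonneg E, mul_nonneg hS0 hB0]
    exact le_of_abs_le hb
  rw [hIgf, hsplit]
  nlinarith [h1, h2]
end

section
/- Let f : [0,1] → ℝ be C² with f(0) = 0, f′(0) = 0, f(1) = 1, f′(1) = 0, and suppose there exists σ* ∈ (0,1) with f″(σ) > 0 for σ ∈ (0,σ*) and f″(σ) < 0 for σ ∈ (σ*,1). Define g(σ) = f(σ)/σ for σ ∈ (0,1] and g(0) = 0. Then g attains its maximum over [0,1] at a unique point σ_M, and σ_M ∈ (σ*, 1); moreover g is strictly increasing on [0, σ_M] and strictly decreasing on [σ_M, 1]. -/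
/-- For an S-shaped Buckley–Leverett flux `f` with single inflection point `σ*`,
the speed `g σ = f σ / σ` of the `c`-family has a unique maximum point `σ_M`,
located in `(σ*, 1)`, and `g` is strictly increasing on `[0, σ_M]` and strictly
decreasing on `[σ_M, 1]`. -/
theorem stmt_13 (f : ℝ → ℝ) (hf : ContDiffOn ℝ 2 f (Set.Icc 0 1))
    (hf0 : f 0 = 0) (hdf0 : derivWithin f (Set.Icc 0 1) 0 = 0)
    (hf1 : f 1 = 1) (hdf1 : derivWithin f (Set.Icc 0 1) 1 = 0)
    (σstar : ℝ) (hσstar : σstar ∈ Set.Ioo (0:ℝ) 1)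
    (hconvex : ∀ σ ∈ Set.Ioo 0 σstar,
      0 < derivWithin (derivWithin f (Set.Icc 0 1)) (Set.Icc 0 1) σ)
    (hconcave : ∀ σ ∈ Set.Ioo σstar 1,
      derivWithin (derivWithin f (Set.Icc 0 1)) (Set.Icc 0 1) σ < 0)
    (g : ℝ → ℝ) (hgdef : ∀ σ ∈ Set.Ioc (0:ℝ) 1, g σ = f σ / σ) (hg0 : g 0 = 0) :
    ∃ σM ∈ Set.Ioo σstar 1,
      (∀ σ ∈ Set.Icc (0:ℝ) 1, g σ ≤ g σM) ∧
      (∀ σ' ∈ Set.Icc (0:ℝ) 1, (∀ σ ∈ Set.Icc (0:ℝ) 1, g σ ≤ g σ') → σ' = σM) ∧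
      StrictMonoOn g (Set.Icc 0 σM) ∧ StrictAntiOn g (Set.Icc σM 1) := by
  set f₁ := derivWithin f (Set.Icc (0:ℝ) 1) with hf₁def
  set f₂ := derivWithin f₁ (Set.Icc (0:ℝ) 1) with hf₂def
  have hudo : UniqueDiffOn ℝ (Set.Icc (0:ℝ) 1) := uniqueDiffOn_Icc one_pos
  have hfd : DifferentiableOn ℝ f (Set.Icc 0 1) := hf.differentiableOn (by norm_num)
  have hf₁cd : ContDiffOn ℝ 1 f₁ (Set.Icc 0 1) := hf.derivWithin hudo (by norm_num)
  have hf₁d : DifferentiableOn ℝ f₁ (Set.Icc 0 1) := hf₁cd.differentiableOn one_ne_zero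
  have hf₁cont : ContinuousOn f₁ (Set.Icc 0 1) := hf₁d.continuousOn
  have hfcont : ContinuousOn f (Set.Icc 0 1) := hfd.continuousOn
  have hmem : ∀ x ∈ Set.Ioo (0:ℝ) 1, Set.Icc (0:ℝ) 1 ∈ nhds x :=
    fun x hx => Icc_mem_nhds hx.1 hx.2
  have hDf : ∀ x ∈ Set.Ioo (0:ℝ) 1, HasDerivAt f (f₁ x) x := by
    intro x hx
    have h1 := (hfd x (Set.Ioo_subset_Icc_self hx)).differentiableAt (hmem x hx)
    have h2 : f₁ x = deriv f x := derivWithin_of_mem_nhds (hmem x hx)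
    exact h2 ▸ h1.hasDerivAt
  have hDf₁ : ∀ x ∈ Set.Ioo (0:ℝ) 1, HasDerivAt f₁ (f₂ x) x := by
    intro x hx
    have h1 := (hf₁d x (Set.Ioo_subset_Icc_self hx)).differentiableAt (hmem x hx)
    have h2 : f₂ x = deriv f₁ x := derivWithin_of_mem_nhds (hmem x hx)
    exact h2 ▸ h1.hasDerivAt
  -- f₁ is strictly monotone on [0,σ*] and strictly antitone on [σ*,1]
  have hm1 : StrictMonoOn f₁ (Set.Icc 0 σstar) := by
    apply strictMonoOn_of_deriv_pos (convex_Icc _ _)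
      (hf₁cont.mono (Set.Icc_subset_Icc le_rfl hσstar.2.le))
    intro x hx
    rw [interior_Icc] at hx
    rw [(hDf₁ x ⟨hx.1, hx.2.trans hσstar.2⟩).deriv]
    exact hconvex x hx
  have hm2 : StrictAntiOn f₁ (Set.Icc σstar 1) := by
    apply strictAntiOn_of_deriv_neg (convex_Icc _ _)
      (hf₁cont.mono (Set.Icc_subset_Icc hσstar.1.le le_rfl))
    intro x hx
    rw [interior_Icc] at hx
    rw [(hDf₁ x ⟨hσstar.1.trans hx.1, hx.2⟩).deriv]
    exact hconcave x hx
  have hf₁pos : ∀ x ∈ Set.Ioo (0:ℝ) 1, 0 < f₁ x := by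
    intro x hx
    rcases le_or_gt x σstar with h | h
    · have := hm1 ⟨le_rfl, hσstar.1.le⟩ ⟨hx.1.le, h⟩ hx.1
      rwa [hdf0] at this
    · have := hm2 ⟨h.le, hx.2.le⟩ ⟨hσstar.2.le, le_rfl⟩ hx.2
      rwa [hdf1] at this
  have hfmono : StrictMonoOn f (Set.Icc 0 1) := by
    apply strictMonoOn_of_deriv_pos (convex_Icc _ _) hfcont
    intro x hx
    rw [interior_Icc] at hx
    rw [(hDf x hx).deriv]
    exact hf₁pos x hx
  have hfpos : ∀ x ∈ Set.Ioc (0:ℝ) 1, 0 < f x := by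
    intro x hx
    have := hfmono ⟨le_rfl, zero_le_one⟩ ⟨hx.1.le, hx.2⟩ hx.1
    rwa [hf0] at this
  -- the auxiliary function H σ = σ f'(σ) - f(σ)
  set H : ℝ → ℝ := fun σ => σ * f₁ σ - f σ with hHdef
  have hHcont : ContinuousOn H (Set.Icc 0 1) := (continuousOn_id.mul hf₁cont).sub hfcont
  have hDH : ∀ x ∈ Set.Ioo (0:ℝ) 1, HasDerivAt H (x * f₂ x) x := by
    intro x hx
    have h1 := ((hasDerivAt_id x).mul (hDf₁ x hx)).sub (hDf x hx)
    refine (h1 : HasDerivAt H _ x).congr_deriv ?_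
    simp only [id_eq]
    ring
  have hH0 : H 0 = 0 := by simp [hHdef, hf0]
  have hH1 : H 1 = -1 := by simp [hHdef, hdf1, hf1]
  have hHmono : StrictMonoOn H (Set.Icc 0 σstar) := by
    apply strictMonoOn_of_deriv_pos (convex_Icc _ _)
      (hHcont.mono (Set.Icc_subset_Icc le_rfl hσstar.2.le))
    intro x hx
    rw [interior_Icc] at hx
    rw [(hDH x ⟨hx.1, hx.2.trans hσstar.2⟩).deriv]
    exact mul_pos hx.1 (hconvex x hx)
  have hHanti : StrictAntiOn H (Set.Icc σstar 1) := by
    apply strictAntiOn_of_deriv_neg (convex_Icc _ _)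
      (hHcont.mono (Set.Icc_subset_Icc hσstar.1.le le_rfl))
    intro x hx
    rw [interior_Icc] at hx
    rw [(hDH x ⟨hσstar.1.trans hx.1, hx.2⟩).deriv]
    exact mul_neg_of_pos_of_neg (hσstar.1.trans hx.1) (hconcave x hx)
  have hHσstar : 0 < H σstar := by
    have := hHmono ⟨le_rfl, hσstar.1.le⟩ ⟨hσstar.1.le, le_rfl⟩ hσstar.1
    rwa [hH0] at this
  -- existence of the zero σM of H in (σ*,1)
  obtain ⟨σM, hσMmem, hHσM⟩ : ∃ σM ∈ Set.Icc σstar 1, H σM = 0 := by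
    have hsub := intermediate_value_Icc' hσstar.2.le
      (hHcont.mono (Set.Icc_subset_Icc hσstar.1.le le_rfl))
    have h0mem : (0:ℝ) ∈ Set.Icc (H 1) (H σstar) := ⟨by rw [hH1]; norm_num, hHσstar.le⟩
    obtain ⟨σM, hσM, hval⟩ := hsub h0mem
    exact ⟨σM, hσM, hval⟩
  have hσMne1 : σM ≠ 1 := by
    intro h; rw [h, hH1] at hHσM; norm_num at hHσM
  have hσMneσ : σM ≠ σstar := by
    intro h; rw [h] at hHσM; rw [hHσM] at hHσstar; exact lt_irrefl 0 hHσstar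
  have hσMmem' : σM ∈ Set.Ioo σstar 1 :=
    ⟨lt_of_le_of_ne hσMmem.1 (Ne.symm hσMneσ), lt_of_le_of_ne hσMmem.2 hσMne1⟩
  have hσM0 : (0:ℝ) < σM := hσstar.1.trans hσMmem'.1
  have hσM1 : σM < 1 := hσMmem'.2
  -- sign of H on (0,σM) and (σM,1)
  have hHpos : ∀ x ∈ Set.Ioo (0:ℝ) σM, 0 < H x := by
    intro x hx
    rcases le_or_gt x σstar with h | h
    · have := hHmono ⟨le_rfl, hσstar.1.le⟩ ⟨hx.1.le, h⟩ hx.1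
      rwa [hH0] at this
    · have := hHanti ⟨h.le, hx.2.le.trans hσM1.le⟩ ⟨hσMmem'.1.le, hσM1.le⟩ hx.2
      rwa [hHσM] at this
  have hHneg : ∀ x ∈ Set.Ioo σM (1:ℝ), H x < 0 := by
    intro x hx
    have := hHanti ⟨hσMmem'.1.le, hσM1.le⟩ ⟨(hσMmem'.1.trans hx.1).le, hx.2.le⟩ hx.1
    rwa [hHσM] at this
  -- derivative of g
  have hDg : ∀ x ∈ Set.Ioo (0:ℝ) 1, HasDerivAt g (H x / x ^ 2) x := by
    intro x hx
    have hx0 : x ≠ 0 := ne_of_gt hx.1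
    have hq : HasDerivAt (fun σ => f σ / σ) ((f₁ x * x - f x * 1) / x ^ 2) x :=
      (hDf x hx).div (hasDerivAt_id x) hx0
    have heq : g =ᶠ[nhds x] fun σ => f σ / σ := by
      filter_upwards [Ioo_mem_nhds hx.1 hx.2] with y hy
      exact hgdef y ⟨hy.1, hy.2.le⟩
    have h2 := hq.congr_of_eventuallyEq heq
    refine h2.congr_deriv ?_
    simp only [hHdef]
    ring
  have hgcont : ContinuousOn g (Set.Ioc 0 1) := by
    apply ContinuousOn.congr (f := fun σ => f σ / σ)
    · exact (hfcont.mono Set.Ioc_subset_Icc_self).div continuousOn_id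
        (fun x hx => ne_of_gt hx.1)
    · exact fun x hx => hgdef x hx
  have hgpos : ∀ x ∈ Set.Ioc (0:ℝ) 1, 0 < g x := by
    intro x hx
    rw [hgdef x hx]
    exact div_pos (hfpos x hx) hx.1
  have hmonoIoc : StrictMonoOn g (Set.Ioc 0 σM) := by
    apply strictMonoOn_of_deriv_pos (convex_Ioc _ _)
      (hgcont.mono (Set.Ioc_subset_Ioc le_rfl hσM1.le))
    intro x hx
    rw [interior_Ioc] at hx
    rw [(hDg x ⟨hx.1, hx.2.trans hσM1⟩).deriv]
    exact div_pos (hHpos x hx) (pow_pos hx.1 2)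
  have hmonoIcc : StrictMonoOn g (Set.Icc 0 σM) := by
    intro x hx y hy hxy
    rcases eq_or_lt_of_le hx.1 with h0 | h0
    · rw [← h0, hg0]
      exact hgpos y ⟨h0 ▸ hxy, hy.2.trans hσM1.le⟩
    · exact hmonoIoc ⟨h0, hx.2⟩ ⟨h0.trans hxy, hy.2⟩ hxy
  have hantiIcc : StrictAntiOn g (Set.Icc σM 1) := by
    apply strictAntiOn_of_deriv_neg (convex_Icc _ _)
      (hgcont.mono (fun x hx => ⟨hσM0.trans_le hx.1, hx.2⟩))
    intro x hx
    rw [interior_Icc] at hx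
    rw [(hDg x ⟨hσM0.trans hx.1, hx.2⟩).deriv]
    exact div_neg_of_neg_of_pos (hHneg x hx) (pow_pos (hσM0.trans hx.1) 2)
  have hmax : ∀ σ ∈ Set.Icc (0:ℝ) 1, g σ ≤ g σM := by
    intro σ hσ
    rcases le_total σ σM with h | h
    · rcases eq_or_lt_of_le h with h' | h'
      · rw [h']
      · exact (hmonoIcc ⟨hσ.1, h⟩ ⟨hσM0.le, le_rfl⟩ h').le
    · rcases eq_or_lt_of_le h with h' | h'
      · rw [← h']
      · exact (hantiIcc ⟨le_rfl, hσM1.le⟩ ⟨h, hσ.2⟩ h').le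
  refine ⟨σM, hσMmem', hmax, ?_, hmonoIcc, hantiIcc⟩
  intro σ' hσ' hmax'
  by_contra hne
  rcases lt_or_gt_of_ne hne with h | h
  · have h1 : g σ' < g σM := hmonoIcc ⟨hσ'.1, h.le⟩ ⟨hσM0.le, le_rfl⟩ h
    exact absurd (hmax' σM ⟨hσM0.le, hσM1.le⟩) (not_le.mpr h1)
  · have h1 : g σ' < g σM := hantiIcc ⟨le_rfl, hσM1.le⟩ ⟨h.le, hσ'.2⟩ h
    exact absurd (hmax' σM ⟨hσM0.le, hσM1.le⟩) (not_le.mpr h1)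
end
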